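/- Let L > 0 and let g : ℝ → ℝ be a continuous L-periodic function. Then there exists a unique C² L-periodic function h : ℝ → ℝ such that h''(x) − h(x) = g(x) for all x ∈ ℝ. -/

import Mathlib

/-!
The operator factors as `h'' - h = (d/dx - 1)(d/dx + 1) h`, so it suffices to solve the
first-order periodic problems `u' = c u + f` for `c = ±1`. For `c L ≠ 0` such a problem has
exactly one `L`-periodic solution: the homogeneous solutions `w 0 * exp (c x)` are periodic only
when they vanish, and a suitable multiple of `∫ t in x..x + L, exp (c (x - t)) f t` is a
solution. Then `v = h' + h` is the periodic solution of `v' = v + g`, and `h` the periodic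
solution of `h' = -h + v`.
-/

open Real intervalIntegral Function

theorem eq_mul_exp_of_hasDerivAt_mul {c : ℝ} {w : ℝ → ℝ} (hw : ∀ x, HasDerivAt w (c * w x) x)
    (x : ℝ) : w x = w 0 * exp (c * x) := by
  have hconst : ∀ y, HasDerivAt (fun y => w y * exp (-(c * y))) 0 y := fun y =>
    ((hw y).mul ((hasDerivAt_id' y).const_mul c).neg.exp).congr_deriv (by ring)
  have hx := is_const_of_deriv_eq_zero (fun y => (hconst y).differentiableAt)
    (fun y => (hconst y).deriv) x 0
  calc w x = w x * exp (-(c * x)) * exp (c * x) := by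
        rw [mul_assoc, ← exp_add, neg_add_cancel, exp_zero, mul_one]
    _ = w 0 * exp (c * x) := by rw [hx, mul_zero, neg_zero, exp_zero, mul_one]

theorem Function.Periodic.eq_zero_of_hasDerivAt_mul {c L : ℝ} (hcL : c * L ≠ 0) {w : ℝ → ℝ}
    (hper : Periodic w L) (hw : ∀ x, HasDerivAt w (c * w x) x) : w = 0 := by
  have hw0 : w 0 = 0 := by
    have h := eq_mul_exp_of_hasDerivAt_mul hw L
    rw [← zero_add L, hper 0, zero_add] at h
    have hexp : exp (c * L) ≠ 1 := by rwa [Ne, exp_eq_one_iff]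
    have : w 0 * (exp (c * L) - 1) = 0 := by linear_combination -h
    exact (mul_eq_zero.mp this).resolve_right (sub_ne_zero.mpr hexp)
  funext x
  rw [eq_mul_exp_of_hasDerivAt_mul hw x, hw0, zero_mul, Pi.zero_apply]

theorem Function.Periodic.eq_of_hasDerivAt_mul_add {c L : ℝ} (hcL : c * L ≠ 0) {f u₁ u₂ : ℝ → ℝ}
    (hper₁ : Periodic u₁ L) (hper₂ : Periodic u₂ L)
    (hu₁ : ∀ x, HasDerivAt u₁ (c * u₁ x + f x) x) (hu₂ : ∀ x, HasDerivAt u₂ (c * u₂ x + f x) x) :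
    u₁ = u₂ := by
  have := (hper₁.sub hper₂).eq_zero_of_hasDerivAt_mul hcL fun x =>
    ((hu₁ x).sub (hu₂ x)).congr_deriv (by rw [Pi.sub_apply]; ring)
  exact sub_eq_zero.mp this

theorem Function.Periodic.deriv {L : ℝ} {u : ℝ → ℝ} (hper : Periodic u L) :
    Periodic (deriv u) L := fun x => by
  rw [← deriv_comp_add_const, hper.funext]

theorem hasDerivAt_intervalIntegral_add_const {E : Type*} [NormedAddCommGroup E] [NormedSpace ℝ E]
    [CompleteSpace E] {φ : ℝ → E} (hφ : Continuous φ) (L x : ℝ) :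
    HasDerivAt (fun x => ∫ t in x..x + L, φ t) (φ (x + L) - φ x) x := by
  have hsplit : (fun x => ∫ t in x..x + L, φ t) =
      fun x => (∫ t in 0..x + L, φ t) - ∫ t in 0..x, φ t :=
    funext fun x => (integral_interval_sub_left (hφ.intervalIntegrable _ _)
      (hφ.intervalIntegrable _ _)).symm
  rw [hsplit]
  exact ((hφ.integral_hasStrictDerivAt 0 _).hasDerivAt.comp_add_const x L).sub
    (hφ.integral_hasStrictDerivAt 0 x).hasDerivAt

/-- Differentiating under the integral gives `u' = c u + (e^{-cL} - 1)⁻¹ (e^{-cL} f (x + L) - f x)`,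
and the periodicity of `f` turns the last term into `f x`. -/
noncomputable def periodicSolution (c L : ℝ) (f : ℝ → ℝ) (x : ℝ) : ℝ :=
  (exp (-(c * L)) - 1)⁻¹ * ∫ t in x..x + L, exp (c * (x - t)) * f t

theorem periodic_periodicSolution {L : ℝ} {f : ℝ → ℝ} (hf : Periodic f L) (c : ℝ) :
    Periodic (periodicSolution c L f) L := fun x => by
  simp only [periodicSolution]
  congr 1
  rw [← integral_comp_add_right]
  exact integral_congr fun t _ => by simp only [add_sub_add_right_eq_sub, hf t]

theorem hasDerivAt_periodicSolution {c L : ℝ} (hcL : c * L ≠ 0) {f : ℝ → ℝ} (hf : Continuous f)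
    (hfper : Periodic f L) (x : ℝ) :
    HasDerivAt (periodicSolution c L f) (c * periodicSolution c L f x + f x) x := by
  have hsplit : periodicSolution c L f = fun x =>
      (exp (-(c * L)) - 1)⁻¹ * (exp (c * x) * ∫ t in x..x + L, exp (-(c * t)) * f t) := by
    funext x
    simp only [periodicSolution, ← integral_const_mul, ← mul_assoc, ← exp_add]
    ring_nf
  have hJ := hasDerivAt_intervalIntegral_add_const (φ := fun t => exp (-(c * t)) * f t)
    (by fun_prop) L x
  have hE := ((hasDerivAt_id' x).const_mul c).exp
  have hne : exp (-(c * L)) - 1 ≠ 0 := by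
    rw [sub_ne_zero, Ne, exp_eq_one_iff, neg_eq_zero]; exact hcL
  rw [hsplit]
  refine ((hE.mul hJ).const_mul _).congr_deriv ?_
  simp only [hfper x, mul_add, neg_add, exp_add, mul_one]
  field_simp
  have hinv : exp (c * x) * exp (-(c * x)) = 1 := by rw [← exp_add, add_neg_cancel, exp_zero]
  linear_combination (exp (-(c * L)) - 1) * f x * hinv

theorem existsUnique_periodic_hasDerivAt_mul_add {c L : ℝ} (hcL : c * L ≠ 0) {f : ℝ → ℝ}
    (hf : Continuous f) (hfper : Periodic f L) :
    ∃! u : ℝ → ℝ, Periodic u L ∧ ∀ x, HasDerivAt u (c * u x + f x) x :=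
  ⟨periodicSolution c L f,
    ⟨periodic_periodicSolution hfper c, hasDerivAt_periodicSolution hcL hf hfper⟩,
    fun _ ⟨hper, hu⟩ => hper.eq_of_hasDerivAt_mul_add hcL (periodic_periodicSolution hfper c) hu
      (hasDerivAt_periodicSolution hcL hf hfper)⟩

theorem contDiff_two_of_hasDerivAt_deriv {u u'' : ℝ → ℝ} (hu : Differentiable ℝ u)
    (hu' : ∀ x, HasDerivAt (deriv u) (u'' x) x) (hu'' : Continuous u'') : ContDiff ℝ 2 u := by
  rw [show (2 : WithTop ℕ∞) = 1 + 1 from rfl, contDiff_succ_iff_deriv, contDiff_one_iff_deriv,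
    funext fun x => (hu' x).deriv]
  exact ⟨hu, by simp, fun x => (hu' x).differentiableAt, hu''⟩

theorem ContDiff.hasDerivAt_deriv {u : ℝ → ℝ} (hu : ContDiff ℝ 2 u) (x : ℝ) :
    HasDerivAt (deriv u) (deriv (deriv u) x) x := by
  rw [show (2 : WithTop ℕ∞) = 1 + 1 from rfl, contDiff_succ_iff_deriv] at hu
  exact (hu.2.2.differentiable one_ne_zero x).hasDerivAt

/-- For every continuous L-periodic g there is a unique C²
L-periodic h with h'' − h = g. -/
theorem periodic_ode_unique_solution
    (L : ℝ) (hL : 0 < L) (g : ℝ → ℝ)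
    (hg : Continuous g) (hgper : Function.Periodic g L) :
    ∃! h : ℝ → ℝ, ContDiff ℝ 2 h ∧ Function.Periodic h L ∧
      ∀ x, deriv (deriv h) x - h x = g x := by
  obtain ⟨v, ⟨hvper, hv⟩, hv_unique⟩ :=
    existsUnique_periodic_hasDerivAt_mul_add (c := 1) (by simpa using hL.ne') hg hgper
  obtain ⟨h, ⟨hper, hh⟩, hh_unique⟩ := existsUnique_periodic_hasDerivAt_mul_add (c := -1)
    (by simpa using hL.ne') (Differentiable.continuous fun x => (hv x).differentiableAt) hvper
  have hh_diff : Differentiable ℝ h := fun x => (hh x).differentiableAt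
  have hh' : ∀ x, HasDerivAt (deriv h) (h x + g x) x := fun x => by
    rw [funext fun x => (hh x).deriv]
    exact ((hh x).const_mul (-1)).add (hv x) |>.congr_deriv (by ring)
  refine ⟨h, ⟨?_, hper, fun x => by rw [(hh' x).deriv]; ring⟩, ?_⟩
  · exact contDiff_two_of_hasDerivAt_deriv hh_diff hh' (hh_diff.continuous.add hg)
  rintro k ⟨hk, hkper, hkode⟩
  have hkd : ∀ x, HasDerivAt k (deriv k x) x := fun x =>
    (hk.differentiable (by norm_num) x).hasDerivAt
  have hv_eq : deriv k + k = v := hv_unique _ ⟨hkper.deriv.add hkper, fun x =>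
    ((hk.hasDerivAt_deriv x).add (hkd x)).congr_deriv (by rw [Pi.add_apply]; linarith [hkode x])⟩
  exact hh_unique k ⟨hkper, fun x => (hkd x).congr_deriv (by rw [← hv_eq, Pi.add_apply]; ring)⟩
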